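/- arXiv:2410.23495 — 4 statements merged into one kernel-verified Lean document; each statement's English description precedes it below -/
import Mathlib

section
/- Let A and B be subsets of the total feature set S with A strictly contained in B, and suppose that for every class c the intersection A ∩ S_c has at least τ−1 elements. Then ACC(A) < ACC(B). -/
open Finset

/-- Number of data points in `N` whose feature set contains the feature `v`. -/
def featCount {F X : Type} [DecidableEq F] (feats : X → Finset F)
    (N : Finset X) (v : F) : ℕ :=
  (N.filter fun x => v ∈ feats x).card

/-- `g(v; T, N)`: the frequency of feature `v` among the data points of `N`,
normalized by the size of the full training set `T`. -/
noncomputable def gval {F X : Type} [DecidableEq F] (feats : X → Finset F)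
    (T N : Finset X) (v : F) : ℝ :=
  (featCount feats N v : ℝ) / (T.card : ℝ)

/-- The set of data points of `T` with nonzero gradient: not memorized (not in
`M`) and not well-classified by the learned set `L` (fewer than `τ` of their
features are learned). -/
def active {F X : Type} [DecidableEq F] [DecidableEq X] (feats : X → Finset F) (τ : ℕ)
    (L : Finset F) (M T : Finset X) : Finset X :=
  (T \ M).filter fun x => ((feats x) ∩ L).card < τ

/-- The learned set after the first `i` steps of a run `us` starting from `L0`. -/
def learnedAfter {F : Type} [DecidableEq F] (L0 : Finset F) (us : List F)
    (i : ℕ) : Finset F :=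
  L0 ∪ (us.take i).toFinset

/-- `us` is a valid greedy training run on the dataset `T` with initially
memorized set `M`, starting from the learned set `L0`; `S` is the set of all
features, `τ` the well-classification threshold and `γ` the noise strength.
At every step the model picks a not-yet-learned feature of maximal frequency
`g` among the active (nonzero-gradient) data points; it is learned if its
frequency is at least `γ/|T|`, and at the end of the run every remaining
unlearned feature has frequency below `γ/|T|` (the remaining active points are
then memorized). -/
structure IsRun {F X : Type} [DecidableEq F] [DecidableEq X] (S : Finset F)
    (feats : X → Finset F) (τ : ℕ) (γ : ℝ) (T M : Finset X)
    (L0 : Finset F) (us : List F) : Prop where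
  mem : ∀ i (h : i < us.length), us.get ⟨i, h⟩ ∈ S \ learnedAfter L0 us i
  maximal : ∀ i (h : i < us.length), ∀ u ∈ S \ learnedAfter L0 us i,
    gval feats T (active feats τ (learnedAfter L0 us i) M T) u ≤
      gval feats T (active feats τ (learnedAfter L0 us i) M T) (us.get ⟨i, h⟩)
  threshold : ∀ i (h : i < us.length),
    γ / (T.card : ℝ) ≤
      gval feats T (active feats τ (learnedAfter L0 us i) M T) (us.get ⟨i, h⟩)
  stopped : ∀ u ∈ S \ learnedAfter L0 us us.length,
    gval feats T (active feats τ (learnedAfter L0 us us.length) M T) u <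
      γ / (T.card : ℝ)

/-- The memorized set after a run: the previously memorized points together
with all points that are still active (not well-classified) at the end of the
run. -/
def finalM {F X : Type} [DecidableEq F] [DecidableEq X] (feats : X → Finset F) (τ : ℕ)
    (T M : Finset X) (L0 : Finset F) (us : List F) : Finset X :=
  M ∪ active feats τ (L0 ∪ us.toFinset) M T

/-- The cumulative dataset `T_{1:j}`, the union of the first `j` chunks. -/
def cumT {X : Type} [DecidableEq X] (chunk : ℕ → Finset X) (j : ℕ) : Finset X :=
  (Finset.Icc 1 j).biUnion chunk

/-- `h(v; L)`: the fraction of data points (of one chunk) containing `v` that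
are not well-classified by the learned set `L`. -/
noncomputable def hval {F : Type} [DecidableEq F] (C : ℕ) (Sc : Fin C → Finset F)
    (nA : Fin C → Finset F → ℕ) (τ n : ℕ) (v : F) (L : Finset F) : ℝ :=
  (1 / (n : ℝ)) * ∑ c : Fin C, ∑ A ∈ (Sc c).powerset,
    (nA c A : ℝ) * (if v ∈ A ∧ (A ∩ L).card < τ then 1 else 0)

/-- The test accuracy of a learned feature set `L`. -/
noncomputable def ACC {F : Type} [DecidableEq F] (C : ℕ) (Sc : Fin C → Finset F)
    (nA : Fin C → Finset F → ℕ) (τ n : ℕ) (L : Finset F) : ℝ :=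
  1 - ((C : ℝ) - 1) / (C : ℝ) * ((1 / (n : ℝ)) *
    ∑ c : Fin C, ∑ A ∈ (Sc c).powerset,
      (nA c A : ℝ) * (if (A ∩ L).card < τ then 1 else 0))

/-!
Adding to `A` a feature `v ∈ B \ A` of class `c` can only turn badly classified points into
well-classified ones, and it does so for at least one: the points of class `c` whose feature set
is `v` together with `τ - 1` features of `A` (which exist by the hypothesis on `A ∩ S_c`). Since
every feature set occurs at least once, the error mass strictly drops.
-/

section errorMass

variable {F : Type} [DecidableEq F] {C : ℕ} (Sc : Fin C → Finset F)
  (nA : Fin C → Finset F → ℕ) (τ : ℕ)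

noncomputable def errorMass (L : Finset F) : ℝ :=
  ∑ c : Fin C, ∑ A ∈ (Sc c).powerset, (nA c A : ℝ) * (if (A ∩ L).card < τ then 1 else 0)

theorem ACC_eq_errorMass (n : ℕ) (L : Finset F) :
    ACC C Sc nA τ n L = 1 - ((C : ℝ) - 1) / C * (1 / n * errorMass Sc nA τ L) :=
  rfl

variable {Sc nA τ}

theorem errorMass_lt_of_subset {L M : Finset F} (hLM : L ⊆ M) {c : Fin C} {D : Finset F}
    (hD : D ∈ (Sc c).powerset) (hnD : 0 < nA c D) (hDL : (D ∩ L).card < τ)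
    (hDM : τ ≤ (D ∩ M).card) : errorMass Sc nA τ M < errorMass Sc nA τ L := by
  have hterm : ∀ c' D', (nA c' D' : ℝ) * (if (D' ∩ M).card < τ then 1 else 0) ≤
      (nA c' D' : ℝ) * (if (D' ∩ L).card < τ then 1 else 0) := by
    intro c' D'
    have : (D' ∩ L).card ≤ (D' ∩ M).card := card_le_card (inter_subset_inter_left hLM)
    gcongr
    split_ifs <;> first | omega | norm_num
  refine sum_lt_sum (fun c' _ => sum_le_sum fun D' _ => hterm c' D') ⟨c, mem_univ c, ?_⟩
  refine sum_lt_sum (fun D' _ => hterm c D') ⟨D, hD, ?_⟩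
  simp [hDL, not_lt.mpr hDM, hnD]

theorem ACC_lt_ACC_of_errorMass_lt {n : ℕ} (hC : 1 < C) (hn : 0 < n) {L M : Finset F}
    (h : errorMass Sc nA τ M < errorMass Sc nA τ L) : ACC C Sc nA τ n L < ACC C Sc nA τ n M := by
  have hC' : (1 : ℝ) < C := by exact_mod_cast hC
  have hfactor : 0 < ((C : ℝ) - 1) / C := div_pos (by linarith) (by linarith)
  rw [ACC_eq_errorMass, ACC_eq_errorMass]
  gcongr

end errorMass

/-- The witness is `v` together with `τ - 1` features of `A ∩ S`. -/
theorem exists_subset_card_inter_lt_le {F : Type} [DecidableEq F] {A B S : Finset F} {v : F}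
    {τ : ℕ} (hτ : 0 < τ) (hAB : A ⊆ B) (hvB : v ∈ B) (hvA : v ∉ A) (hvS : v ∈ S)
    (hA : τ - 1 ≤ (A ∩ S).card) : ∃ D ⊆ S, (D ∩ A).card < τ ∧ τ ≤ (D ∩ B).card := by
  obtain ⟨T, hTAS, hT⟩ := exists_subset_card_eq hA
  have hTA : T ⊆ A := hTAS.trans inter_subset_left
  refine ⟨insert v T, insert_subset hvS (hTAS.trans inter_subset_right), ?_, ?_⟩
  · rw [insert_inter_of_notMem hvA, inter_eq_left.mpr hTA, hT]
    omega
  · rw [inter_eq_left.mpr (insert_subset hvB (hTA.trans hAB)),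
      card_insert_of_notMem fun hvT => hvA (hTA hvT), hT]
    omega

theorem acc_strict_mono_general
    {F : Type} [DecidableEq F]
    (C τ n : ℕ) (hC : 1 < C) (hτpos : 0 < τ)
    (Sc : Fin C → Finset F)
    (nA : Fin C → Finset F → ℕ)
    (hnA : ∀ c, ∀ A ∈ (Sc c).powerset, 1 ≤ nA c A)
    (hn : n = ∑ c : Fin C, ∑ A ∈ (Sc c).powerset, nA c A)
    (A B : Finset F)
    (hBS : B ⊆ Finset.univ.biUnion Sc)
    (hAB : A ⊂ B)
    (hA : ∀ c, τ - 1 ≤ (A ∩ Sc c).card) :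
    ACC C Sc nA τ n A < ACC C Sc nA τ n B := by
  obtain ⟨v, hvB, hvA⟩ := exists_of_ssubset hAB
  obtain ⟨c, -, hvc⟩ := mem_biUnion.mp (hBS hvB)
  obtain ⟨D, hDc, hDA, hDB⟩ :=
    exists_subset_card_inter_lt_le hτpos hAB.subset hvB hvA hvc (hA c)
  have hD : D ∈ (Sc c).powerset := mem_powerset.mpr hDc
  have hn_pos : 0 < n := hn ▸ sum_pos' (fun _ _ => Nat.zero_le _) ⟨c, mem_univ c,
    sum_pos' (fun _ _ => Nat.zero_le _) ⟨D, hD, hnA c D hD⟩⟩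
  exact ACC_lt_ACC_of_errorMass_lt hC hn_pos
    (errorMass_lt_of_subset hAB.subset hD (hnA c D hD) hDA hDB)

/-- Lemma: strict monotonicity of test accuracy.
If `A ⊊ B ⊆ S` and `|A ∩ S_c| ≥ τ - 1` for every class `c`, then
`ACC(A) < ACC(B)`. -/
theorem acc_strict_mono
    {F : Type} [DecidableEq F]
    (C K τ n : ℕ) (hC : 1 < C) (hτpos : 0 < τ) (hτK : τ < K)
    (Sc : Fin C → Finset F)
    (hK : ∀ c, (Sc c).card = K)
    (hdisjS : ∀ c c', c ≠ c' → Disjoint (Sc c) (Sc c'))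
    (nA : Fin C → Finset F → ℕ)
    (hnA : ∀ c, ∀ A ∈ (Sc c).powerset, 1 ≤ nA c A)
    (hn : n = ∑ c : Fin C, ∑ A ∈ (Sc c).powerset, nA c A)
    (A B : Finset F)
    (hBS : B ⊆ Finset.univ.biUnion Sc)
    (hAB : A ⊂ B)
    (hA : ∀ c, τ - 1 ≤ (A ∩ Sc c).card) :
    ACC C Sc nA τ n A < ACC C Sc nA τ n B :=
  acc_strict_mono_general C τ n hC hτpos Sc nA hnA hn A B hBS hAB hA
end

section
/- Suppose two models are trained by the greedy training process on the same cumulative dataset T_{1:j}, both starting from the same learned set L and with no memorized data, possibly breaking ties between equally frequent features differently. If u_{c,i} denotes the i-th feature of class c learned by the first model (with u_{c,i} = NA if learning within class c has stopped before the i-th step) and u'_{c,i} that of the second model, then u_{c,i} = u'_{c,i} for every class c and every index i; in particular, the per-class order in which features are learned is deterministic. -/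
/-!
Features of different classes never occur in the same data point, so for `v ∈ S_c` the
frequency `g(v; T_{1:j}, N)` of a run without memorized data equals `h(v; L)`, and this depends
on the learned set `L` only through `L ∩ S_c`. Hence the features of class `c` that a run learns,
taken in order, form a greedy run of their own for the score `h` on `S_c`. Since `h` separates
the features of `S_c`, the greedy choice of such a run is forced at every step, and its stopping
time is forced too, because it is the threshold `γ/|T|` on the same score.
-/

open Finset

namespace List

theorem exists_getElem_eq_getElem_filter_and_filter_take {α : Type*} (p : α → Bool) :
    ∀ (l : List α) (i : ℕ) (hi : i < (l.filter p).length),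
      ∃ k, ∃ hk : k < l.length,
        l[k] = (l.filter p)[i] ∧ (l.take k).filter p = (l.filter p).take i
  | [], i, hi => by simp at hi
  | a :: l, i, hi => by
    by_cases hpa : p a
    · cases i with
      | zero => exact ⟨0, by simp, by simp [hpa], by simp⟩
      | succ i =>
        obtain ⟨k, hk, hget, htake⟩ :=
          exists_getElem_eq_getElem_filter_and_filter_take p l i (by simpa [hpa] using hi)
        exact ⟨k + 1, by simpa using hk, by simpa [hpa] using hget, by simp [hpa, htake]⟩
    · obtain ⟨k, hk, hget, htake⟩ :=
        exists_getElem_eq_getElem_filter_and_filter_take p l i (by simpa [hpa] using hi)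
      exact ⟨k + 1, by simpa using hk, by simpa [hpa] using hget, by simp [hpa, htake]⟩

end List

section Greedy

variable {F : Type} [DecidableEq F]

/-- `IsRun` with the score `g(·; T, active L)` replaced by an arbitrary `score L`. -/
structure IsGreedySeq (cand : Finset F) (score : Finset F → F → ℝ) (θ : ℝ)
    (L0 : Finset F) (vs : List F) : Prop where
  mem : ∀ i (h : i < vs.length), vs[i] ∈ cand \ learnedAfter L0 vs i
  maximal : ∀ i (h : i < vs.length), ∀ u ∈ cand \ learnedAfter L0 vs i,
    score (learnedAfter L0 vs i) u ≤ score (learnedAfter L0 vs i) vs[i]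
  threshold : ∀ i (h : i < vs.length), θ ≤ score (learnedAfter L0 vs i) vs[i]
  stopped : ∀ u ∈ cand \ learnedAfter L0 vs vs.length,
    score (learnedAfter L0 vs vs.length) u < θ

theorem IsRun.isGreedySeq {X : Type} [DecidableEq X] {S : Finset F} {feats : X → Finset F}
    {τ : ℕ} {γ : ℝ} {T M : Finset X} {L0 : Finset F} {us : List F}
    (h : IsRun S feats τ γ T M L0 us) :
    IsGreedySeq S (fun L => gval feats T (active feats τ L M T)) (γ / T.card) L0 us :=
  ⟨h.mem, h.maximal, h.threshold, h.stopped⟩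

theorem learnedAfter_eq_of_take_eq {L0 : Finset F} {vs ws : List F} {i : ℕ}
    (h : vs.take i = ws.take i) : learnedAfter L0 vs i = learnedAfter L0 ws i := by
  rw [learnedAfter, learnedAfter, h]

theorem inter_union_toFinset_filter (D L0 : Finset F) (l : List F) :
    D ∩ (L0 ∪ (l.filter (· ∈ D)).toFinset) = D ∩ (L0 ∪ l.toFinset) := by
  ext a
  simp only [mem_inter, mem_union, List.mem_toFinset, List.mem_filter, decide_eq_true_eq]
  tauto

theorem exists_getElem_eq_getElem_filter_and_inter_learnedAfter (D L0 : Finset F) (vs : List F)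
    (i : ℕ) (hi : i < (vs.filter (· ∈ D)).length) :
    ∃ k, ∃ hk : k < vs.length, vs[k] = (vs.filter (· ∈ D))[i] ∧
      D ∩ learnedAfter L0 (vs.filter (· ∈ D)) i = D ∩ learnedAfter L0 vs k := by
  obtain ⟨k, hk, hget, htake⟩ :=
    List.exists_getElem_eq_getElem_filter_and_filter_take (· ∈ D) vs i hi
  exact ⟨k, hk, hget, by
    rw [learnedAfter, learnedAfter, ← htake, inter_union_toFinset_filter]⟩

namespace IsGreedySeq

variable {cand : Finset F} {score : Finset F → F → ℝ} {θ : ℝ} {L0 : Finset F} {vs ws : List F}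

theorem mem_cand (hv : IsGreedySeq cand score θ L0 vs) {a : F} (ha : a ∈ vs) : a ∈ cand := by
  obtain ⟨i, hi, rfl⟩ := List.mem_iff_getElem.1 ha
  exact (mem_sdiff.1 (hv.mem i hi)).1

theorem learnedAfter_subset (hv : IsGreedySeq cand score θ L0 vs) (i : ℕ) :
    learnedAfter L0 vs i ⊆ L0 ∪ cand :=
  union_subset_union subset_rfl fun _ ha =>
    hv.mem_cand ((List.take_sublist i vs).subset (List.mem_toFinset.1 ha))

/-- Otherwise `vs[m]` would be a candidate above the threshold for the stopped run `ws`. -/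
theorem lt_length_of_take_eq (hv : IsGreedySeq cand score θ L0 vs)
    (hw : IsGreedySeq cand score θ L0 ws) {m : ℕ} (hm : m < vs.length)
    (h : vs.take m = ws.take m) : m < ws.length := by
  by_contra hwm
  have hws : learnedAfter L0 vs m = learnedAfter L0 ws ws.length := by
    rw [learnedAfter_eq_of_take_eq h, learnedAfter, learnedAfter,
      List.take_of_length_le (not_lt.1 hwm), List.take_length]
  have hstop := hw.stopped _ (hws ▸ hv.mem m hm)
  have hthr := hv.threshold m hm
  rw [hws] at hthr
  linarith

theorem getElem_eq_of_take_eq (hv : IsGreedySeq cand score θ L0 vs)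
    (hw : IsGreedySeq cand score θ L0 ws)
    (hinj : ∀ L ⊆ L0 ∪ cand, Set.InjOn (score L) cand) {m : ℕ}
    (hm : m < vs.length) (hm' : m < ws.length) (h : vs.take m = ws.take m) :
    vs[m] = ws[m] := by
  have hL := learnedAfter_eq_of_take_eq (L0 := L0) h
  have hvm := hv.mem m hm
  have hwm := hw.mem m hm'
  rw [← hL] at hwm
  have hle := hv.maximal m hm _ hwm
  have hge := hw.maximal m hm' _ (hL ▸ hvm)
  rw [← hL] at hge
  exact hinj _ (hv.learnedAfter_subset m) (mem_sdiff.1 hvm).1 (mem_sdiff.1 hwm).1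
    (le_antisymm hge hle)

theorem eq (hv : IsGreedySeq cand score θ L0 vs) (hw : IsGreedySeq cand score θ L0 ws)
    (hinj : ∀ L ⊆ L0 ∪ cand, Set.InjOn (score L) cand) : vs = ws := by
  have htake : ∀ m, vs.take m = ws.take m := by
    intro m
    induction m with
    | zero => simp
    | succ m ih =>
      by_cases hm : m < vs.length
      · have hm' := hv.lt_length_of_take_eq hw hm ih
        rw [List.take_add_one, List.take_add_one, ih, List.getElem?_eq_getElem hm,
          List.getElem?_eq_getElem hm', hv.getElem_eq_of_take_eq hw hinj hm hm' ih]
      · have hm' : ¬ m < ws.length := fun hm' => hm (hw.lt_length_of_take_eq hv hm' ih.symm)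
        rw [List.take_of_length_le (by omega), List.take_of_length_le (by omega)]
        rwa [List.take_of_length_le (by omega), List.take_of_length_le (by omega)] at ih
  have h := htake (max vs.length ws.length)
  rwa [List.take_of_length_le (le_max_left _ _), List.take_of_length_le (le_max_right _ _)] at h

theorem filter (hv : IsGreedySeq cand score θ L0 vs) {D : Finset F} (hD : D ⊆ cand)
    (hloc : ∀ L L', D ∩ L = D ∩ L' → ∀ v ∈ D, score L v = score L' v) :
    IsGreedySeq D score θ L0 (vs.filter (· ∈ D)) := by
  have hsdiff {L L' : Finset F} (h : D ∩ L = D ∩ L') : D \ L = D \ L' :=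
    sdiff_eq_sdiff_iff_inter_eq_inter.2 h
  have hmemD {i : ℕ} (hi : i < (vs.filter (· ∈ D)).length) : (vs.filter (· ∈ D))[i] ∈ D := by
    simpa using (List.mem_filter.1 (List.getElem_mem hi)).2
  refine ⟨fun i hi => ?_, fun i hi u hu => ?_, fun i hi => ?_, fun u hu => ?_⟩
  · obtain ⟨k, hk, hget, hL⟩ := exists_getElem_eq_getElem_filter_and_inter_learnedAfter D L0 vs i hi
    rw [hsdiff hL, ← hget]
    exact mem_sdiff.2 ⟨hget ▸ hmemD hi, (mem_sdiff.1 (hv.mem k hk)).2⟩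
  · obtain ⟨k, hk, hget, hL⟩ := exists_getElem_eq_getElem_filter_and_inter_learnedAfter D L0 vs i hi
    rw [hsdiff hL] at hu
    rw [hloc _ _ hL u (mem_sdiff.1 hu).1, hloc _ _ hL _ (hmemD hi), ← hget]
    exact hv.maximal k hk u (sdiff_subset_sdiff hD subset_rfl hu)
  · obtain ⟨k, hk, hget, hL⟩ := exists_getElem_eq_getElem_filter_and_inter_learnedAfter D L0 vs i hi
    rw [hloc _ _ hL _ (hmemD hi), ← hget]
    exact hv.threshold k hk
  · have hL : D ∩ learnedAfter L0 (vs.filter (· ∈ D)) (vs.filter (· ∈ D)).length =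
        D ∩ learnedAfter L0 vs vs.length := by
      simp only [learnedAfter, List.take_length, inter_union_toFinset_filter]
    rw [hsdiff hL] at hu
    rw [hloc _ _ hL u (mem_sdiff.1 hu).1]
    exact hv.stopped u (sdiff_subset_sdiff hD subset_rfl hu)

end IsGreedySeq

end Greedy

section Dataset

variable {F X : Type} [DecidableEq F] {C : ℕ} (Sc : Fin C → Finset F)
  (nA : Fin C → Finset F → ℕ)

theorem hval_eq_of_inter_eq (hdisj : ∀ c c', c ≠ c' → Disjoint (Sc c) (Sc c')) (τ n : ℕ)
    {c : Fin C} {L L' : Finset F} (h : Sc c ∩ L = Sc c ∩ L') {v : F} (hv : v ∈ Sc c) :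
    hval C Sc nA τ n v L = hval C Sc nA τ n v L' := by
  unfold hval
  congr 1
  refine sum_congr rfl fun c' _ => sum_congr rfl fun A hA => ?_
  rw [mem_powerset] at hA
  by_cases hc : c' = c
  · subst hc
    have hAL : A ∩ L = A ∩ L' := by
      rw [← inter_eq_left.2 hA, inter_assoc, h, ← inter_assoc]
    rw [hAL]
  · have hvA : v ∉ A := fun hvA => disjoint_left.1 (hdisj c' c hc) (hA hvA) hv
    simp [hvA]

theorem card_filter_feats_eq_sum (label : X → Fin C) (feats : X → Finset F)
    (hfeats : ∀ x, feats x ⊆ Sc (label x)) (s : Finset X)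
    (hcount : ∀ c, ∀ A ∈ (Sc c).powerset,
      (s.filter fun x => label x = c ∧ feats x = A).card = nA c A)
    (q : Finset F → Prop) [DecidablePred q] :
    (s.filter fun x => q (feats x)).card =
      ∑ c : Fin C, ∑ A ∈ (Sc c).powerset, if q A then nA c A else 0 := by
  rw [card_eq_sum_card_fiberwise (f := label) (t := univ) fun _ _ => mem_coe.2 (mem_univ _)]
  refine sum_congr rfl fun c _ => ?_
  rw [card_eq_sum_card_fiberwise (f := feats) (t := (Sc c).powerset) fun x hx => by
    obtain ⟨-, rfl⟩ := mem_filter.1 hx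
    exact mem_coe.2 (mem_powerset.2 (hfeats x))]
  refine sum_congr rfl fun A hA => ?_
  simp only [filter_filter]
  split_ifs with hq
  · rw [← hcount c A hA]
    congr 1
    refine filter_congr fun x _ => ?_
    constructor
    · rintro ⟨⟨-, hc⟩, hA⟩
      exact ⟨hc, hA⟩
    · rintro ⟨hc, rfl⟩
      exact ⟨⟨hq, hc⟩, rfl⟩
  · refine card_eq_zero.2 (filter_eq_empty_iff.2 fun x _ => ?_)
    rintro ⟨⟨hqx, -⟩, rfl⟩
    exact hq hqx

variable [DecidableEq X]

theorem card_filter_cumT (chunk : ℕ → Finset X)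
    (hdisj : ∀ j j', j ≠ j' → Disjoint (chunk j) (chunk j')) (j : ℕ) (P : X → Prop)
    [DecidablePred P] :
    ((cumT chunk j).filter P).card = ∑ l ∈ Icc 1 j, ((chunk l).filter P).card := by
  rw [cumT, filter_biUnion,
    card_biUnion fun l _ l' _ h => disjoint_filter_filter (hdisj l l' h)]

/-- On the cumulative dataset, both the count of `v` among the active points and `|T_{1:j}|`
are `j` times their value on a single chunk; the factor `j` cancels. -/
theorem gval_active_cumT_eq_hval (τ n : ℕ) (label : X → Fin C) (feats : X → Finset F)
    (chunk : ℕ → Finset X) (hfeats : ∀ x, feats x ⊆ Sc (label x))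
    (hdisj : ∀ j j', j ≠ j' → Disjoint (chunk j) (chunk j'))
    (hcard : ∀ j, 1 ≤ j → (chunk j).card = n)
    (hcount : ∀ j, 1 ≤ j → ∀ c : Fin C, ∀ A ∈ (Sc c).powerset,
      ((chunk j).filter fun x => label x = c ∧ feats x = A).card = nA c A)
    {j : ℕ} (hj : 1 ≤ j) (L : Finset F) (v : F) :
    gval feats (cumT chunk j) (active feats τ L ∅ (cumT chunk j)) v = hval C Sc nA τ n v L := by
  have hT : (cumT chunk j).card = j * n := by
    simpa [sum_congr rfl fun l hl => hcard l (mem_Icc.1 hl).1] using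
      card_filter_cumT chunk hdisj j fun _ => True
  have hN : featCount feats (active feats τ L ∅ (cumT chunk j)) v =
      j * ∑ c : Fin C, ∑ A ∈ (Sc c).powerset,
        if v ∈ A ∧ (A ∩ L).card < τ then nA c A else 0 := by
    rw [featCount, active, sdiff_empty, filter_filter, card_filter_cumT chunk hdisj,
      sum_congr rfl fun l hl => card_filter_feats_eq_sum Sc nA label feats hfeats (chunk l)
        (hcount l (mem_Icc.1 hl).1) fun A => (A ∩ L).card < τ ∧ v ∈ A]
    simp [and_comm]
  have hj0 : (j : ℝ) ≠ 0 := by positivity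
  rw [gval, hN, hT, hval]
  push_cast
  simp only [mul_ite, mul_one, mul_zero]
  rw [mul_div_mul_left _ _ hj0, one_div, inv_mul_eq_div]

end Dataset

theorem learning_order_deterministic_general
    {F X : Type} [DecidableEq F] [DecidableEq X]
    (C τ : ℕ) (γ : ℝ) (n : ℕ)
    (Sc : Fin C → Finset F) (label : X → Fin C) (feats : X → Finset F)
    (nA : Fin C → Finset F → ℕ) (chunk : ℕ → Finset X)
    (hdisjS : ∀ c c', c ≠ c' → Disjoint (Sc c) (Sc c'))
    (hfeats : ∀ x, feats x ⊆ Sc (label x))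
    (hchunkdisj : ∀ j j', j ≠ j' → Disjoint (chunk j) (chunk j'))
    (hchunkcard : ∀ j, 1 ≤ j → (chunk j).card = n)
    (hcount : ∀ j, 1 ≤ j → ∀ c : Fin C, ∀ A ∈ (Sc c).powerset,
      ((chunk j).filter fun x => label x = c ∧ feats x = A).card = nA c A)
    (hinj : ∀ L : Finset F, L ⊆ Finset.univ.biUnion Sc →
      ∀ c : Fin C, ∀ v₁ ∈ Sc c, ∀ v₂ ∈ Sc c,
        hval C Sc nA τ n v₁ L = hval C Sc nA τ n v₂ L → v₁ = v₂)
    (j : ℕ) (hj : 1 ≤ j)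
    (L0 : Finset F) (hL0 : L0 ⊆ Finset.univ.biUnion Sc)
    (us us' : List F)
    (hrun : IsRun (Finset.univ.biUnion Sc) feats τ γ (cumT chunk j) ∅ L0 us)
    (hrun' : IsRun (Finset.univ.biUnion Sc) feats τ γ (cumT chunk j) ∅ L0 us') :
    ∀ (c : Fin C) (i : ℕ),
      (us.filter fun v => decide (v ∈ Sc c))[i]? =
        (us'.filter fun v => decide (v ∈ Sc c))[i]? := by
  intro c i
  have hscore : (fun L => gval feats (cumT chunk j) (active feats τ L ∅ (cumT chunk j))) =
      fun L v => hval C Sc nA τ n v L :=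
    funext₂ <| gval_active_cumT_eq_hval Sc nA τ n label feats chunk hfeats hchunkdisj
      hchunkcard hcount hj
  have hScS : Sc c ⊆ univ.biUnion Sc := subset_biUnion_of_mem Sc (mem_univ c)
  have hloc : ∀ L L', Sc c ∩ L = Sc c ∩ L' → ∀ v ∈ Sc c,
      hval C Sc nA τ n v L = hval C Sc nA τ n v L' :=
    fun _ _ h _ hv => hval_eq_of_inter_eq Sc nA hdisjS τ n h hv
  have hclass {vs : List F}
      (hvs : IsRun (univ.biUnion Sc) feats τ γ (cumT chunk j) ∅ L0 vs) :
      IsGreedySeq (Sc c) (fun L v => hval C Sc nA τ n v L) (γ / (cumT chunk j).card) L0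
        (vs.filter (· ∈ Sc c)) := by
    have hg := hvs.isGreedySeq
    rw [hscore] at hg
    exact hg.filter hScS hloc
  rw [(hclass hrun).eq (hclass hrun') fun L hL v₁ hv₁ v₂ hv₂ =>
    hinj L (hL.trans (union_subset hL0 hScS)) c v₁ hv₁ v₂ hv₂]

/-- Lemma: the per-class order of learned features is
deterministic. Two greedy training runs on the same cumulative dataset
`T_{1:j}`, starting from the same learned set `L0` and with no memorized data,
learn, within each class, exactly the same features in the same order
(`NA`, i.e. `none`, when learning in that class has stopped). -/
theorem learning_order_deterministic
    {F X : Type} [DecidableEq F] [DecidableEq X]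
    (C K τ : ℕ) (γ : ℝ) (n : ℕ)
    (Sc : Fin C → Finset F) (label : X → Fin C) (feats : X → Finset F)
    (nA : Fin C → Finset F → ℕ) (chunk : ℕ → Finset X)
    (hγ : 0 < γ) (hτK : τ < K)
    (hK : ∀ c, (Sc c).card = K)
    (hdisjS : ∀ c c', c ≠ c' → Disjoint (Sc c) (Sc c'))
    (hfeats : ∀ x, feats x ⊆ Sc (label x))
    (hnA : ∀ c, ∀ A ∈ (Sc c).powerset, 1 ≤ nA c A)
    (hn : n = ∑ c : Fin C, ∑ A ∈ (Sc c).powerset, nA c A)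
    (hchunkdisj : ∀ j j', j ≠ j' → Disjoint (chunk j) (chunk j'))
    (hchunkcard : ∀ j, 1 ≤ j → (chunk j).card = n)
    (hcount : ∀ j, 1 ≤ j → ∀ c : Fin C, ∀ A ∈ (Sc c).powerset,
      ((chunk j).filter fun x => label x = c ∧ feats x = A).card = nA c A)
    (hinj : ∀ L : Finset F, L ⊆ Finset.univ.biUnion Sc →
      ∀ c : Fin C, ∀ v₁ ∈ Sc c, ∀ v₂ ∈ Sc c,
        hval C Sc nA τ n v₁ L = hval C Sc nA τ n v₂ L → v₁ = v₂)
    (j : ℕ) (hj : 1 ≤ j)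
    (L0 : Finset F) (hL0 : L0 ⊆ Finset.univ.biUnion Sc)
    (us us' : List F)
    (hrun : IsRun (Finset.univ.biUnion Sc) feats τ γ (cumT chunk j) ∅ L0 us)
    (hrun' : IsRun (Finset.univ.biUnion Sc) feats τ γ (cumT chunk j) ∅ L0 us') :
    ∀ (c : Fin C) (i : ℕ),
      (us.filter fun v => decide (v ∈ Sc c))[i]? =
        (us'.filter fun v => decide (v ∈ Sc c))[i]? :=
  learning_order_deterministic_general C τ γ n Sc label feats nA chunk hdisjS hfeats hchunkdisj
    hchunkcard hcount hinj j hj L0 hL0 us us' hrun hrun'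
end

section
/- There exists a nonempty set G with G strictly contained in S such that the learned feature set at the end of the first experiment is always equal to G, regardless of the randomness (tie-breaking) of the training process and of whether warm-starting or cold-starting is used: L_warm^(1) = L_cold^(1) = G. Moreover, G satisfies |G ∩ S_c| ≥ τ−1 for every class c and G ∩ S_c ⊊ S_c for every class c. -/
open Finset

/-! On a chunk with the prescribed counts, the frequency `g` of a class-`c` feature among the
non-memorized points is `h(v; L ∩ S_c)`: only the features already learned in class `c` matter.
As `h` separates the features of a class, the next class-`c` feature a run learns is determined
by the class-`c` features learned before, so the class-`c` part of every run is an iterate of one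
deterministic greedy step from `∅`, and a fixed point of it once the run stops; two iterates
from the same start that are both fixed points coincide. A feature below the threshold is never
learned, and while fewer than `τ` class-`c` features are learned every class-`c` point is still
active, so the `τ - 1` features above the threshold all get learned. -/

open Function

section Greedy

variable {F : Type} [DecidableEq F] {s : F → Finset F → ℝ} {θ : ℝ} {P L : Finset F}

noncomputable def greedyStep (s : F → Finset F → ℝ) (θ : ℝ) (P L : Finset F) : Finset F :=
  if h : ∃ w ∈ P \ L, θ ≤ s w L ∧ ∀ z ∈ P \ L, s z L ≤ s w L then insert h.choose L
  else L

theorem greedyStep_eq_insert {u : F}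
    (hinj : ∀ v₁ ∈ P, ∀ v₂ ∈ P, s v₁ L = s v₂ L → v₁ = v₂)
    (hu : u ∈ P \ L) (hθ : θ ≤ s u L) (hmax : ∀ z ∈ P \ L, s z L ≤ s u L) :
    greedyStep s θ P L = insert u L := by
  have h : ∃ w ∈ P \ L, θ ≤ s w L ∧ ∀ z ∈ P \ L, s z L ≤ s w L :=
    ⟨u, hu, hθ, hmax⟩
  obtain ⟨hw, -, hwmax⟩ := h.choose_spec
  rw [greedyStep, dif_pos h, hinj _ (mem_sdiff.1 hw).1 u (mem_sdiff.1 hu).1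
    (le_antisymm (hmax _ hw) (hwmax u hu))]

theorem greedyStep_eq_self (h : ∀ w ∈ P \ L, s w L < θ) : greedyStep s θ P L = L := by
  rw [greedyStep, dif_neg]
  rintro ⟨w, hw, hθ, -⟩
  exact (h w hw).not_ge hθ

end Greedy

theorem Function.IsFixedPt.iterate_eq_iterate {α : Type*} {f : α → α} {a : α} {k m : ℕ}
    (hk : IsFixedPt f (f^[k] a)) (hm : IsFixedPt f (f^[m] a)) : f^[k] a = f^[m] a := by
  wlog hkm : k ≤ m generalizing k m
  · exact (this hm hk (le_of_not_ge hkm)).symm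
  obtain ⟨d, rfl⟩ := Nat.exists_eq_add_of_le hkm
  rw [add_comm, iterate_add_apply, (hk.iterate d).eq]

theorem Finset.biUnion_sdiff_image_inter {ι α : Type*} [Fintype ι] [DecidableEq ι]
    [DecidableEq α] {t : ι → Finset α} (ht : Pairwise (Disjoint on t)) {v : ι → α}
    (hv : ∀ i, v i ∈ t i) (i : ι) :
    (univ.biUnion t \ univ.image v) ∩ t i = (t i).erase (v i) := by
  ext a
  simp only [mem_inter, mem_sdiff, mem_biUnion, mem_univ, true_and, mem_image, mem_erase]
  constructor
  · rintro ⟨⟨-, hav⟩, hai⟩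
    exact ⟨fun h => hav ⟨i, h.symm⟩, hai⟩
  · rintro ⟨hai, ha⟩
    refine ⟨⟨⟨i, ha⟩, ?_⟩, ha⟩
    rintro ⟨j, rfl⟩
    obtain rfl : j = i := by
      by_contra hne
      exact disjoint_left.1 (ht hne) (hv j) ha
    exact hai rfl

theorem Finset.eq_of_forall_inter_eq {ι α : Type*} [Fintype ι] [DecidableEq α]
    {t : ι → Finset α} {A B : Finset α} (hA : A ⊆ univ.biUnion t) (hB : B ⊆ univ.biUnion t)
    (h : ∀ i, A ∩ t i = B ∩ t i) : A = B := by
  rw [← inter_eq_left.2 hA, ← inter_eq_left.2 hB, inter_biUnion, inter_biUnion]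
  exact biUnion_congr rfl fun i _ => h i

def RealizesCounts {F X : Type} [DecidableEq F] {C : ℕ} (Sc : Fin C → Finset F)
    (label : X → Fin C) (feats : X → Finset F) (nA : Fin C → Finset F → ℕ) (T : Finset X) :
    Prop :=
  ∀ c, ∀ A ∈ (Sc c).powerset, #{x ∈ T | label x = c ∧ feats x = A} = nA c A

section Dataset

variable {F X : Type} [DecidableEq F] [DecidableEq X] {C τ n : ℕ} {Sc : Fin C → Finset F}
  {label : X → Fin C} {feats : X → Finset F} {nA : Fin C → Finset F → ℕ} {T M : Finset X}
  {L : Finset F} {c : Fin C} {v : F}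

theorem gval_active_le_gval : gval feats T (active feats τ L M T) v ≤ gval feats T T v := by
  unfold gval featCount active
  gcongr
  exact (filter_subset _ _).trans sdiff_subset

theorem active_of_card_lt (hL : #L < τ) : active feats τ L ∅ T = T := by
  rw [active, sdiff_empty, filter_eq_self]
  exact fun x _ => (card_le_card inter_subset_right).trans_lt hL

theorem gval_active_inter (hdisj : Pairwise (Disjoint on Sc))
    (hfeats : ∀ x, feats x ⊆ Sc (label x)) (hv : v ∈ Sc c) :
    gval feats T (active feats τ L M T) v = gval feats T (active feats τ (L ∩ Sc c) M T) v := by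
  unfold gval featCount active
  rw [filter_filter, filter_filter]
  congr 3
  refine filter_congr fun x _ => and_congr_left fun hvx => ?_
  have hlabel : label x = c := by
    by_contra hne
    exact disjoint_left.1 (hdisj hne) (hfeats x hvx) hv
  rw [← inter_assoc, inter_eq_left.2 ((inter_subset_left).trans (hlabel ▸ hfeats x))]

theorem featCount_active_eq_sum (hfeats : ∀ x, feats x ⊆ Sc (label x))
    (hcnt : RealizesCounts Sc label feats nA T) (L : Finset F) (v : F) :
    featCount feats (active feats τ L ∅ T) v =
      ∑ c, ∑ A ∈ (Sc c).powerset, nA c A * if v ∈ A ∧ #(A ∩ L) < τ then 1 else 0 := by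
  have hsum : featCount feats (active feats τ L ∅ T) v =
      ∑ x ∈ T, if v ∈ feats x ∧ #(feats x ∩ L) < τ then 1 else 0 := by
    rw [featCount, active, sdiff_empty, filter_filter, card_filter]
    simp only [and_comm]
  rw [hsum, ← sum_fiberwise T label]
  refine sum_congr rfl fun c _ => ?_
  rw [← sum_fiberwise_of_maps_to' (s := {x ∈ T | label x = c}) (g := feats)
    (t := (Sc c).powerset) (f := fun A => if v ∈ A ∧ #(A ∩ L) < τ then 1 else 0)
    fun x hx => mem_powerset.2 ((mem_filter.1 hx).2 ▸ hfeats x)]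
  refine sum_congr rfl fun A hA => ?_
  rw [sum_const, filter_filter, hcnt c A hA, smul_eq_mul]

theorem gval_active_eq_hval (hfeats : ∀ x, feats x ⊆ Sc (label x))
    (hcnt : RealizesCounts Sc label feats nA T) (hT : #T = n) (L : Finset F) (v : F) :
    gval feats T (active feats τ L ∅ T) v = hval C Sc nA τ n v L := by
  rw [gval, hval, featCount_active_eq_sum hfeats hcnt, hT, one_div_mul_eq_div]
  push_cast
  rfl

end Dataset

section Run

variable {F X : Type} [DecidableEq F] [DecidableEq X] {S : Finset F} {feats : X → Finset F}
  {τ : ℕ} {γ : ℝ} {T M : Finset X} {L0 : Finset F} {us : List F}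

theorem learnedAfter_zero : learnedAfter L0 us 0 = L0 := by
  simp [learnedAfter]

theorem learnedAfter_succ {i : ℕ} (hi : i < us.length) :
    learnedAfter L0 us (i + 1) = insert (us.get ⟨i, hi⟩) (learnedAfter L0 us i) := by
  simp only [learnedAfter, List.take_add_one, List.getElem?_eq_getElem hi, Option.toList_some,
    List.toFinset_append, List.toFinset_cons, List.toFinset_nil, insert_empty_eq,
    List.get_eq_getElem]
  rw [← union_assoc, union_comm, ← insert_eq]

theorem learnedAfter_length : learnedAfter L0 us us.length = L0 ∪ us.toFinset := by
  simp [learnedAfter]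

namespace IsRun

theorem toFinset_subset (hrun : IsRun S feats τ γ T M L0 us) : us.toFinset ⊆ S := by
  intro u hu
  obtain ⟨i, rfl⟩ := List.mem_iff_get.1 (List.mem_toFinset.1 hu)
  exact (mem_sdiff.1 (hrun.mem i i.2)).1

theorem le_gval_of_mem (hrun : IsRun S feats τ γ T M L0 us) {u : F} (hu : u ∈ us) :
    γ / #T ≤ gval feats T T u := by
  obtain ⟨i, rfl⟩ := List.mem_iff_get.1 hu
  exact (hrun.threshold i i.2).trans gval_active_le_gval

variable {C : ℕ} {Sc : Fin C → Finset F} {label : X → Fin C} {c : Fin C}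

theorem card_le_card_inter (hrun : IsRun S feats τ γ T ∅ ∅ us)
    (hdisj : Pairwise (Disjoint on Sc)) (hfeats : ∀ x, feats x ⊆ Sc (label x))
    {H : Finset F} (hHc : H ⊆ Sc c) (hHS : H ⊆ S) (hHτ : #H ≤ τ)
    (hH : ∀ w ∈ H, γ / #T ≤ gval feats T T w) : #H ≤ #(us.toFinset ∩ Sc c) := by
  by_contra! hlt
  have hall : active feats τ (us.toFinset ∩ Sc c) ∅ T = T :=
    active_of_card_lt (hlt.trans_le hHτ)
  have hlearned : H ⊆ us.toFinset ∩ Sc c := by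
    intro w hw
    refine mem_inter.2 ⟨?_, hHc hw⟩
    by_contra hwL
    have hstop := hrun.stopped w (by
      rw [learnedAfter_length, empty_union]
      exact mem_sdiff.2 ⟨hHS hw, hwL⟩)
    rw [learnedAfter_length, empty_union, gval_active_inter hdisj hfeats (hHc hw), hall] at hstop
    exact hstop.not_ge (hH w hw)
  exact hlt.not_ge (card_le_card hlearned)

theorem pred_le_card_inter (hrun : IsRun S feats τ γ T ∅ ∅ us)
    (hdisj : Pairwise (Disjoint on Sc)) (hfeats : ∀ x, feats x ⊆ Sc (label x))
    {w : Fin τ → F} (hw : Injective w) (hwc : ∀ i, w i ∈ Sc c) (hwS : ∀ i, w i ∈ S)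
    (hhigh : ∀ i : Fin τ, (i : ℕ) + 1 < τ → γ / #T ≤ gval feats T T (w i)) :
    τ - 1 ≤ #(us.toFinset ∩ Sc c) := by
  set H := ({i | (i : ℕ) < τ - 1} : Finset (Fin τ)).image w
  have hHcard : #H = τ - 1 := by
    rw [card_image_of_injective _ hw, Fin.card_filter_val_lt, min_eq_right (τ.sub_le 1)]
  refine hHcard ▸ hrun.card_le_card_inter hdisj hfeats (image_subset_iff.2 fun i _ => hwc i)
    (image_subset_iff.2 fun i _ => hwS i) (hHcard ▸ τ.sub_le 1)
    (forall_mem_image.2 fun i hi => ?_)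
  exact hhigh i (by have := (mem_filter.1 hi).2; omega)

variable {n : ℕ} {nA : Fin C → Finset F → ℕ}

theorem exists_iterate_greedyStep (hrun : IsRun (univ.biUnion Sc) feats τ γ T ∅ ∅ us)
    (hdisj : Pairwise (Disjoint on Sc)) (hfeats : ∀ x, feats x ⊆ Sc (label x))
    (hcnt : RealizesCounts Sc label feats nA T) (hT : #T = n)
    (hinj : ∀ L ⊆ univ.biUnion Sc, ∀ c : Fin C, ∀ v₁ ∈ Sc c, ∀ v₂ ∈ Sc c,
      hval C Sc nA τ n v₁ L = hval C Sc nA τ n v₂ L → v₁ = v₂) (c : Fin C) :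
    ∀ i ≤ us.length, ∃ k, learnedAfter ∅ us i ∩ Sc c =
      (greedyStep (hval C Sc nA τ n) (γ / n) (Sc c))^[k] ∅ := by
  intro i
  induction i with
  | zero => exact fun _ => ⟨0, by rw [learnedAfter_zero, empty_inter, iterate_zero_apply]⟩
  | succ i ih =>
    intro hi
    replace hi : i < us.length := hi
    obtain ⟨k, hk⟩ := ih hi.le
    set L := learnedAfter ∅ us i
    set u := us.get ⟨i, hi⟩
    obtain ⟨-, huL⟩ := mem_sdiff.1 (hrun.mem i hi)
    rw [learnedAfter_succ hi]
    by_cases huc : u ∈ Sc c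
    swap
    · exact ⟨k, by rw [insert_inter_of_notMem huc, hk]⟩
    refine ⟨k + 1, ?_⟩
    rw [insert_inter_of_mem huc, iterate_succ_apply', ← hk]
    have hscore : ∀ z ∈ Sc c,
        gval feats T (active feats τ L ∅ T) z = hval C Sc nA τ n z (L ∩ Sc c) := by
      intro z hz
      rw [gval_active_inter hdisj hfeats hz, gval_active_eq_hval hfeats hcnt hT]
    have hSc : Sc c ⊆ univ.biUnion Sc := subset_biUnion_of_mem Sc (mem_univ c)
    refine (greedyStep_eq_insert (hinj _ (inter_subset_right.trans hSc) c)
      (mem_sdiff.2 ⟨huc, fun h => huL (mem_inter.1 h).1⟩) ?_ fun z hz => ?_).symm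
    · rw [← hscore u huc, ← hT]
      exact hrun.threshold i hi
    · obtain ⟨hzc, hzL⟩ := mem_sdiff.1 hz
      rw [← hscore u huc, ← hscore z hzc]
      exact hrun.maximal i hi z (mem_sdiff.2 ⟨hSc hzc, fun h => hzL (mem_inter.2 ⟨h, hzc⟩)⟩)

theorem isFixedPt_greedyStep (hrun : IsRun (univ.biUnion Sc) feats τ γ T ∅ ∅ us)
    (hdisj : Pairwise (Disjoint on Sc)) (hfeats : ∀ x, feats x ⊆ Sc (label x))
    (hcnt : RealizesCounts Sc label feats nA T) (hT : #T = n) (c : Fin C) :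
    IsFixedPt (greedyStep (hval C Sc nA τ n) (γ / n) (Sc c)) (us.toFinset ∩ Sc c) := by
  refine greedyStep_eq_self fun w hw => ?_
  obtain ⟨hwc, hwL⟩ := mem_sdiff.1 hw
  have hstop := hrun.stopped w (by
    rw [learnedAfter_length, empty_union]
    exact mem_sdiff.2 ⟨subset_biUnion_of_mem Sc (mem_univ c) hwc,
      fun h => hwL (mem_inter.2 ⟨h, hwc⟩)⟩)
  rwa [learnedAfter_length, empty_union, gval_active_inter hdisj hfeats hwc,
    gval_active_eq_hval hfeats hcnt hT, hT] at hstop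

theorem toFinset_eq {vs : List F} (hrun : IsRun (univ.biUnion Sc) feats τ γ T ∅ ∅ us)
    (hrun' : IsRun (univ.biUnion Sc) feats τ γ T ∅ ∅ vs)
    (hdisj : Pairwise (Disjoint on Sc)) (hfeats : ∀ x, feats x ⊆ Sc (label x))
    (hcnt : RealizesCounts Sc label feats nA T) (hT : #T = n)
    (hinj : ∀ L ⊆ univ.biUnion Sc, ∀ c : Fin C, ∀ v₁ ∈ Sc c, ∀ v₂ ∈ Sc c,
      hval C Sc nA τ n v₁ L = hval C Sc nA τ n v₂ L → v₁ = v₂) :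
    us.toFinset = vs.toFinset := by
  refine eq_of_forall_inter_eq hrun.toFinset_subset hrun'.toFinset_subset fun c => ?_
  obtain ⟨k, hk⟩ := hrun.exists_iterate_greedyStep hdisj hfeats hcnt hT hinj c _ le_rfl
  obtain ⟨m, hm⟩ := hrun'.exists_iterate_greedyStep hdisj hfeats hcnt hT hinj c _ le_rfl
  rw [learnedAfter_length, empty_union] at hk hm
  have hfix := hk ▸ hrun.isFixedPt_greedyStep hdisj hfeats hcnt hT c
  have hfix' := hm ▸ hrun'.isFixedPt_greedyStep hdisj hfeats hcnt hT c
  rw [hk, hm, hfix.iterate_eq_iterate hfix']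

end IsRun

end Run

theorem first_experiment_learned_set_general
    {F X : Type} [DecidableEq F] [DecidableEq X]
    (C K τ : ℕ) (γ : ℝ) (n : ℕ)
    (Sc : Fin C → Finset F) (label : X → Fin C) (feats : X → Finset F)
    (nA : Fin C → Finset F → ℕ) (chunk : ℕ → Finset X)
    (hτK : τ < K)
    (hK : ∀ c, (Sc c).card = K)
    (hdisjS : ∀ c c', c ≠ c' → Disjoint (Sc c) (Sc c'))
    (hfeats : ∀ x, feats x ⊆ Sc (label x))
    (hchunkcard : ∀ j, 1 ≤ j → (chunk j).card = n)
    (hcount : ∀ j, 1 ≤ j → ∀ c : Fin C, ∀ A ∈ (Sc c).powerset,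
      ((chunk j).filter fun x => label x = c ∧ feats x = A).card = nA c A)
    (hC : 0 < C) (hτpos : 1 < τ)
    (hinj : ∀ L : Finset F, L ⊆ Finset.univ.biUnion Sc →
      ∀ c : Fin C, ∀ v₁ ∈ Sc c, ∀ v₂ ∈ Sc c,
        hval C Sc nA τ n v₁ L = hval C Sc nA τ n v₂ L → v₁ = v₂)
    (hii : ∀ c : Fin C, ∃ v : Fin τ → F, Function.Injective v ∧ (∀ i, v i ∈ Sc c) ∧
      ∀ j, 1 ≤ j →
        ((∀ i : Fin τ, (i : ℕ) + 1 < τ →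
            γ / (n : ℝ) ≤ gval feats (chunk j) (chunk j) (v i)) ∧
          gval feats (chunk j) (chunk j)
            (v ⟨τ - 1, Nat.sub_lt (Nat.lt_of_lt_of_le Nat.one_pos hτpos.le) Nat.one_pos⟩) < γ / (n : ℝ)))
 :
    ∃ G : Finset F, G.Nonempty ∧ G ⊂ Finset.univ.biUnion Sc ∧
      (∀ us : List F,
        IsRun (Finset.univ.biUnion Sc) feats τ γ (cumT chunk 1) ∅ ∅ us →
          us.toFinset = G) ∧
      (∀ c : Fin C, τ - 1 ≤ (G ∩ Sc c).card ∧ G ∩ Sc c ⊂ Sc c) := by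
  have hT : #(chunk 1) = n := hchunkcard 1 le_rfl
  have hcnt : RealizesCounts Sc label feats nA (chunk 1) := hcount 1 le_rfl
  rw [show cumT chunk 1 = chunk 1 by simp [cumT]]
  choose v hvinj hvmem hvgval using hii
  set last : Fin τ := ⟨τ - 1, by omega⟩
  obtain ⟨G, hGS, hruns, hcard, hlast⟩ : ∃ G ⊆ univ.biUnion Sc,
      (∀ us, IsRun (univ.biUnion Sc) feats τ γ (chunk 1) ∅ ∅ us → us.toFinset = G) ∧
      (∀ c, τ - 1 ≤ #(G ∩ Sc c)) ∧ ∀ c, v c last ∉ G := by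
    by_cases hex : ∃ us, IsRun (univ.biUnion Sc) feats τ γ (chunk 1) ∅ ∅ us
    · obtain ⟨us, hrun⟩ := hex
      refine ⟨us.toFinset, hrun.toFinset_subset,
        fun vs hvs => hvs.toFinset_eq hrun hdisjS hfeats hcnt hT hinj,
        fun c => hrun.pred_le_card_inter hdisjS hfeats (hvinj c) (hvmem c)
          (fun i => subset_biUnion_of_mem Sc (mem_univ c) (hvmem c i))
          fun i hi => hT ▸ (hvgval c 1 le_rfl).1 i hi,
        fun c hc => ((hvgval c 1 le_rfl).2.trans_le' (hT ▸ hrun.le_gval_of_mem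
          (List.mem_toFinset.1 hc))).false⟩
    · refine ⟨univ.biUnion Sc \ univ.image (v · last), sdiff_subset,
        fun us hrun => (hex ⟨us, hrun⟩).elim, fun c => ?_,
        fun c h => (mem_sdiff.1 h).2 (mem_image_of_mem _ (mem_univ c))⟩
      rw [biUnion_sdiff_image_inter hdisjS (fun c => hvmem c last),
        card_erase_of_mem (hvmem c last), hK c]
      omega
  obtain ⟨c₀⟩ : Nonempty (Fin C) := ⟨⟨0, hC⟩⟩
  refine ⟨G, ?_, (ssubset_iff_of_subset hGS).2 ⟨v c₀ last,
      subset_biUnion_of_mem Sc (mem_univ c₀) (hvmem c₀ last), hlast c₀⟩, hruns, fun c =>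
    ⟨hcard c, (ssubset_iff_of_subset inter_subset_right).2
      ⟨v c last, hvmem c last, fun h => hlast c (mem_inter.1 h).1⟩⟩⟩
  obtain ⟨a, ha⟩ := card_pos.1 ((by omega : 0 < τ - 1).trans_le (hcard c₀))
  exact ⟨a, (mem_inter.1 ha).1⟩

/-- first experiment: there is a nonempty `G ⊊ S` such that
the learned set at the end of the first experiment is always `G`, regardless of
tie-breaking randomness (and warm- and cold-starting coincide in the first
experiment, both running the training process on `T_1` from `L = ∅`, `M = ∅`);
moreover `|G ∩ S_c| ≥ τ - 1` and `G ∩ S_c ⊊ S_c` for every class `c`. -/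
theorem first_experiment_learned_set
    {F X : Type} [DecidableEq F] [DecidableEq X]
    (C K τ : ℕ) (γ : ℝ) (n : ℕ)
    (Sc : Fin C → Finset F) (label : X → Fin C) (feats : X → Finset F)
    (nA : Fin C → Finset F → ℕ) (chunk : ℕ → Finset X)
    (hγ : 0 < γ) (hτK : τ < K)
    (hK : ∀ c, (Sc c).card = K)
    (hdisjS : ∀ c c', c ≠ c' → Disjoint (Sc c) (Sc c'))
    (hfeats : ∀ x, feats x ⊆ Sc (label x))
    (hnA : ∀ c, ∀ A ∈ (Sc c).powerset, 1 ≤ nA c A)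
    (hn : n = ∑ c : Fin C, ∑ A ∈ (Sc c).powerset, nA c A)
    (hchunkdisj : ∀ j j', j ≠ j' → Disjoint (chunk j) (chunk j'))
    (hchunkcard : ∀ j, 1 ≤ j → (chunk j).card = n)
    (hcount : ∀ j, 1 ≤ j → ∀ c : Fin C, ∀ A ∈ (Sc c).powerset,
      ((chunk j).filter fun x => label x = c ∧ feats x = A).card = nA c A)
    (hC : 0 < C) (hτpos : 1 < τ)
    (hinj : ∀ L : Finset F, L ⊆ Finset.univ.biUnion Sc →
      ∀ c : Fin C, ∀ v₁ ∈ Sc c, ∀ v₂ ∈ Sc c,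
        hval C Sc nA τ n v₁ L = hval C Sc nA τ n v₂ L → v₁ = v₂)
    (hii : ∀ c : Fin C, ∃ v : Fin τ → F, Function.Injective v ∧ (∀ i, v i ∈ Sc c) ∧
      ∀ j, 1 ≤ j →
        ((∀ i : Fin τ, (i : ℕ) + 1 < τ →
            γ / (n : ℝ) ≤ gval feats (chunk j) (chunk j) (v i)) ∧
          gval feats (chunk j) (chunk j)
            (v ⟨τ - 1, Nat.sub_lt (Nat.lt_of_lt_of_le Nat.one_pos hτpos.le) Nat.one_pos⟩) < γ / (n : ℝ)))
 :
    ∃ G : Finset F, G.Nonempty ∧ G ⊂ Finset.univ.biUnion Sc ∧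
      (∀ us : List F,
        IsRun (Finset.univ.biUnion Sc) feats τ γ (cumT chunk 1) ∅ ∅ us →
          us.toFinset = G) ∧
      (∀ c : Fin C, τ - 1 ≤ (G ∩ Sc c).card ∧ G ∩ Sc c ⊂ Sc c) :=
  first_experiment_learned_set_general C K τ γ n Sc label feats nA chunk hτK hK hdisjS hfeats
    hchunkcard hcount hC hτpos hinj hii
end

section
/- Under warm-starting, the learned feature set never grows after the first experiment: for every J ≥ 2, L_warm^(J) = L_warm^(1) = G, where G is the learned set at the end of the first experiment. -/
/-!
When the first experiment stops, every unlearned feature `u` occurs in fewer than `γ` of the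
points of `T₁` that the learned set `G` does not classify well. Warm-starting keeps all such
points of earlier chunks memorized, so in experiment `j + 1` the active points are the badly
classified points of `T_{j+1}` alone. Since `T_{j+1}` has the same composition as `T₁`, `u` again
occurs in fewer than `γ` of them, the first candidate misses the threshold `γ / |T_{1:j+1}|`,
and the run learns nothing; the memorized set again covers every badly classified point.
-/

open Finset

section

variable {F X : Type} [DecidableEq F]

lemma featCount_mono (feats : X → Finset F) {N N' : Finset X} (h : N ⊆ N') (v : F) :
    featCount feats N v ≤ featCount feats N' v :=
  card_le_card (filter_subset_filter _ h)

lemma gval_lt_div_card_of_featCount_le (feats : X → Finset F) {γ : ℝ} {T T' N N' : Finset X}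
    {v : F} (hT : T' ⊆ T) (hN : featCount feats N v ≤ featCount feats N' v)
    (h : gval feats T' N' v < γ / T'.card) : gval feats T N v < γ / T.card := by
  have hT' : (0 : ℝ) < T'.card := by
    by_contra h0
    simp_all [gval, le_antisymm (not_lt.mp h0) (Nat.cast_nonneg _)]
  have hTpos : (0 : ℝ) < T.card := hT'.trans_le (by exact_mod_cast card_le_card hT)
  unfold gval at h ⊢
  rw [div_lt_div_iff_of_pos_right hT'] at h
  rw [div_lt_div_iff_of_pos_right hTpos]
  exact lt_of_le_of_lt (by exact_mod_cast hN) h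

lemma active_subset_active_of_subset_union [DecidableEq X] (feats : X → Finset F) (τ : ℕ)
    {L : Finset F} {M T T₀ T₁ : Finset X} (hT : T ⊆ T₀ ∪ T₁)
    (hM : active feats τ L ∅ T₀ ⊆ M) : active feats τ L M T ⊆ active feats τ L ∅ T₁ := by
  intro x hx
  obtain ⟨hxTM, hxτ⟩ := mem_filter.mp hx
  obtain ⟨hxT, hxM⟩ := mem_sdiff.mp hxTM
  rcases mem_union.mp (hT hxT) with h₀ | h₁
  · exact absurd (hM (mem_filter.mpr ⟨mem_sdiff.mpr ⟨h₀, notMem_empty x⟩, hxτ⟩)) hxM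
  · exact mem_filter.mpr ⟨mem_sdiff.mpr ⟨h₁, notMem_empty x⟩, hxτ⟩

lemma active_subset_finalM [DecidableEq X] (feats : X → Finset F) (τ : ℕ) (T M : Finset X)
    (L0 : Finset F) (us : List F) :
    active feats τ (L0 ∪ us.toFinset) ∅ T ⊆ finalM feats τ T M L0 us := by
  intro x hx
  by_cases hxM : x ∈ M
  · exact mem_union_left _ hxM
  · obtain ⟨hxT, hxτ⟩ := mem_filter.mp hx
    exact mem_union_right _ (mem_filter.mpr ⟨mem_sdiff.mpr ⟨(mem_sdiff.mp hxT).1, hxM⟩, hxτ⟩)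

lemma cumT_one [DecidableEq X] (chunk : ℕ → Finset X) : cumT chunk 1 = chunk 1 := by
  simp [cumT]

lemma cumT_succ [DecidableEq X] (chunk : ℕ → Finset X) (j : ℕ) :
    cumT chunk (j + 1) = cumT chunk j ∪ chunk (j + 1) := by
  rw [cumT, ← insert_Icc_right_eq_Icc_add_one (by omega), biUnion_insert, union_comm, cumT]

lemma cumT_mono [DecidableEq X] (chunk : ℕ → Finset X) : Monotone (cumT chunk) :=
  fun _ _ hij => biUnion_subset_biUnion_of_subset_left _ (Icc_subset_Icc_right hij)

variable {C : ℕ}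

def HasComposition (Sc : Fin C → Finset F) (label : X → Fin C) (feats : X → Finset F)
    (nA : Fin C → Finset F → ℕ) (T : Finset X) : Prop :=
  ∀ c, ∀ A ∈ (Sc c).powerset, (T.filter fun x => label x = c ∧ feats x = A).card = nA c A

namespace HasComposition

variable {Sc : Fin C → Finset F} {label : X → Fin C} {feats : X → Finset F}
  {nA : Fin C → Finset F → ℕ} {T T' : Finset X}

lemma card_filter_feats (hT : HasComposition Sc label feats nA T)
    (hfeats : ∀ x, feats x ⊆ Sc (label x)) (P : Finset F → Prop) [DecidablePred P] :
    (T.filter fun x => P (feats x)).card = ∑ c, ∑ A ∈ (Sc c).powerset.filter P, nA c A := by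
  rw [card_eq_sum_card_fiberwise (f := label) (t := univ) fun _ _ => mem_univ _]
  refine sum_congr rfl fun c _ => ?_
  rw [card_eq_sum_card_fiberwise (f := feats) (t := (Sc c).powerset.filter P)]
  · refine sum_congr rfl fun A hA => ?_
    rw [← hT c A (mem_filter.mp hA).1, filter_filter, filter_filter]
    congr 1
    ext x
    simp only [mem_filter]
    exact and_congr_right fun _ =>
      ⟨fun h => h.2, fun h => ⟨h.2 ▸ (mem_filter.mp hA).2, h⟩⟩
  · intro x hx
    obtain ⟨hxP, hc⟩ := mem_filter.mp (mem_coe.mp hx)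
    exact mem_coe.mpr <| mem_filter.mpr
      ⟨mem_powerset.mpr (hc ▸ hfeats x), (mem_filter.mp hxP).2⟩

lemma featCount_active_eq [DecidableEq X] (hT : HasComposition Sc label feats nA T)
    (hT' : HasComposition Sc label feats nA T') (hfeats : ∀ x, feats x ⊆ Sc (label x))
    (τ : ℕ) (L : Finset F) (v : F) :
    featCount feats (active feats τ L ∅ T) v = featCount feats (active feats τ L ∅ T') v := by
  simp only [featCount, active, sdiff_empty, filter_filter]
  rw [hT.card_filter_feats hfeats fun A => (A ∩ L).card < τ ∧ v ∈ A,
    hT'.card_filter_feats hfeats fun A => (A ∩ L).card < τ ∧ v ∈ A]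

end HasComposition

namespace IsRun

variable [DecidableEq X] {S : Finset F} {feats : X → Finset F} {τ : ℕ} {γ : ℝ}
  {T M : Finset X} {L0 : Finset F} {us : List F}

lemma gval_lt_of_mem_sdiff (run : IsRun S feats τ γ T M L0 us) {u : F}
    (hu : u ∈ S \ (L0 ∪ us.toFinset)) :
    gval feats T (active feats τ (L0 ∪ us.toFinset) M T) u < γ / T.card := by
  simpa [learnedAfter] using run.stopped u (by simpa [learnedAfter] using hu)

lemma eq_nil_of_forall_gval_lt (run : IsRun S feats τ γ T M L0 us)
    (h : ∀ u ∈ S \ L0, gval feats T (active feats τ L0 M T) u < γ / T.card) : us = [] := by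
  by_contra hne
  have h0 : 0 < us.length := List.length_pos_iff.mpr hne
  have hL : learnedAfter L0 us 0 = L0 := by simp [learnedAfter]
  have hmem := run.mem 0 h0
  have hthr := run.threshold 0 h0
  rw [hL] at hmem hthr
  exact (h _ hmem).not_ge hthr

/-- The new data `T₁` is a copy (same composition) of a dataset `T' ⊆ T` on which training from
`L0` has already stopped, and the badly classified points of the old data `T₀` are memorized. -/
lemma eq_nil_of_stopped_on_copy {Sc : Fin C → Finset F} {label : X → Fin C}
    {nA : Fin C → Finset F → ℕ} {T₀ T₁ T' : Finset X} (run : IsRun S feats τ γ T M L0 us)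
    (hT : T ⊆ T₀ ∪ T₁) (hT' : T' ⊆ T) (hcover : active feats τ L0 ∅ T₀ ⊆ M)
    (hfeats : ∀ x, feats x ⊆ Sc (label x)) (h₁ : HasComposition Sc label feats nA T₁)
    (h' : HasComposition Sc label feats nA T')
    (hstop : ∀ u ∈ S \ L0, gval feats T' (active feats τ L0 ∅ T') u < γ / T'.card) :
    us = [] :=
  run.eq_nil_of_forall_gval_lt fun u hu =>
    gval_lt_div_card_of_featCount_le feats hT'
      ((featCount_mono feats (active_subset_active_of_subset_union feats τ hT hcover) u).trans_eq
        (h₁.featCount_active_eq h' hfeats τ L0 u))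
      (hstop u hu)

end IsRun

end

theorem warm_learned_set_constant_general
    {F X : Type} [DecidableEq F] [DecidableEq X]
    (C τ : ℕ) (γ : ℝ)
    (Sc : Fin C → Finset F) (label : X → Fin C) (feats : X → Finset F)
    (nA : Fin C → Finset F → ℕ) (chunk : ℕ → Finset X)
    (hfeats : ∀ x, feats x ⊆ Sc (label x))
    (hcount : ∀ j, 1 ≤ j → ∀ c : Fin C, ∀ A ∈ (Sc c).powerset,
      ((chunk j).filter fun x => label x = c ∧ feats x = A).card = nA c A)
    (Lw : ℕ → Finset F) (Mw : ℕ → Finset X) (usw : ℕ → List F)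
    (hMw0 : Mw 0 = ∅)
    (hwarm : ∀ j : ℕ,
      IsRun (Finset.univ.biUnion Sc) feats τ γ (cumT chunk (j + 1)) (Mw j) (Lw j)
        (usw (j + 1)) ∧
      Lw (j + 1) = Lw j ∪ (usw (j + 1)).toFinset ∧
      Mw (j + 1) = finalM feats τ (cumT chunk (j + 1)) (Mw j) (Lw j) (usw (j + 1)))
 :
    ∀ J : ℕ, 2 ≤ J → Lw J = Lw 1 := by
  obtain ⟨run₁, hLw₁, hMw₁⟩ := hwarm 0
  have hstop : ∀ u ∈ univ.biUnion Sc \ Lw 1,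
      gval feats (chunk 1) (active feats τ (Lw 1) ∅ (chunk 1)) u < γ / (chunk 1).card := by
    intro u hu
    have h := run₁.gval_lt_of_mem_sdiff (hLw₁ ▸ hu)
    rwa [← hLw₁, hMw0, cumT_one] at h
  have key : ∀ j, 1 ≤ j → Lw j = Lw 1 ∧ active feats τ (Lw 1) ∅ (cumT chunk j) ⊆ Mw j := by
    intro j hj
    induction j, hj using Nat.le_induction with
    | base =>
      have h := active_subset_finalM feats τ (cumT chunk 1) (Mw 0) (Lw 0) (usw 1)
      exact ⟨rfl, by rwa [← hLw₁, ← hMw₁] at h⟩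
    | succ j hj ih =>
      obtain ⟨run, hL, hM⟩ := hwarm j
      rw [ih.1] at run hL hM
      have hnil : usw (j + 1) = [] :=
        run.eq_nil_of_stopped_on_copy (cumT_succ chunk j).subset
          (cumT_one chunk ▸ cumT_mono chunk (by omega)) ih.2 hfeats
          (hcount (j + 1) (by omega)) (hcount 1 le_rfl) hstop
      have hL' : Lw (j + 1) = Lw 1 := by rw [hL, hnil, List.toFinset_nil, union_empty]
      have h := active_subset_finalM feats τ (cumT chunk (j + 1)) (Mw j) (Lw 1) (usw (j + 1))
      rw [← hL, ← hM, hL'] at h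
      exact ⟨hL', h⟩
  exact fun J hJ => (key J (by omega)).1

/-- under warm-starting the learned feature set never grows
after the first experiment: for every `J ≥ 2`, `L_warm^(J) = L_warm^(1)`. -/
theorem warm_learned_set_constant
    {F X : Type} [DecidableEq F] [DecidableEq X]
    (C K τ : ℕ) (γ : ℝ) (n : ℕ)
    (Sc : Fin C → Finset F) (label : X → Fin C) (feats : X → Finset F)
    (nA : Fin C → Finset F → ℕ) (chunk : ℕ → Finset X)
    (hγ : 0 < γ) (hτK : τ < K)
    (hK : ∀ c, (Sc c).card = K)
    (hdisjS : ∀ c c', c ≠ c' → Disjoint (Sc c) (Sc c'))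
    (hfeats : ∀ x, feats x ⊆ Sc (label x))
    (hnA : ∀ c, ∀ A ∈ (Sc c).powerset, 1 ≤ nA c A)
    (hn : n = ∑ c : Fin C, ∑ A ∈ (Sc c).powerset, nA c A)
    (hchunkdisj : ∀ j j', j ≠ j' → Disjoint (chunk j) (chunk j'))
    (hchunkcard : ∀ j, 1 ≤ j → (chunk j).card = n)
    (hcount : ∀ j, 1 ≤ j → ∀ c : Fin C, ∀ A ∈ (Sc c).powerset,
      ((chunk j).filter fun x => label x = c ∧ feats x = A).card = nA c A)
    (hC : 0 < C) (hτpos : 0 < τ)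
    (hinj : ∀ L : Finset F, L ⊆ Finset.univ.biUnion Sc →
      ∀ c : Fin C, ∀ v₁ ∈ Sc c, ∀ v₂ ∈ Sc c,
        hval C Sc nA τ n v₁ L = hval C Sc nA τ n v₂ L → v₁ = v₂)
    (hii : ∀ c : Fin C, ∃ v : Fin τ → F, Function.Injective v ∧ (∀ i, v i ∈ Sc c) ∧
      ∀ j, 1 ≤ j →
        ((∀ i : Fin τ, (i : ℕ) + 1 < τ →
            γ / (n : ℝ) ≤ gval feats (chunk j) (chunk j) (v i)) ∧
          gval feats (chunk j) (chunk j)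
            (v ⟨τ - 1, Nat.sub_lt hτpos Nat.one_pos⟩) < γ / (n : ℝ)))
    (Lw : ℕ → Finset F) (Mw : ℕ → Finset X) (usw : ℕ → List F)
    (hLw0 : Lw 0 = ∅) (hMw0 : Mw 0 = ∅)
    (hwarm : ∀ j : ℕ,
      IsRun (Finset.univ.biUnion Sc) feats τ γ (cumT chunk (j + 1)) (Mw j) (Lw j)
        (usw (j + 1)) ∧
      Lw (j + 1) = Lw j ∪ (usw (j + 1)).toFinset ∧
      Mw (j + 1) = finalM feats τ (cumT chunk (j + 1)) (Mw j) (Lw j) (usw (j + 1)))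
 :
    ∀ J : ℕ, 2 ≤ J → Lw J = Lw 1 :=
  warm_learned_set_constant_general C τ γ Sc label feats nA chunk hfeats hcount Lw Mw usw hMw0 hwarm
end
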